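/- Let J ⊆ ℝ be an interval on which f ≠ 0 and W > 0. The rotational hypersurface is 1-minimal over J (i.e. 𝔠₁ = 0 at every point (u, v, w) with u ∈ J and cos w ≠ 0) if and only if φ satisfies the differential equation 2φ'·(f'² + φ'²) + f·(f'·φ'' − f''·φ') = 0 on J. -/

import Mathlib

open Real Matrix

noncomputable section

/-- A vector in Euclidean 4-space `𝔼⁴`. -/
def vec4 (a b c d : ℝ) : EuclideanSpace ℝ (Fin 4) :=
  (WithLp.equiv 2 (Fin 4 → ℝ)).symm ![a, b, c, d]

/-- Partial derivative in the `i`-th variable (`i = 0,1,2` for `u,v,w`)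
of a map `ℝ³ → 𝔼⁴`. -/
def pd : Fin 3 → (ℝ → ℝ → ℝ → EuclideanSpace ℝ (Fin 4)) →
    ℝ → ℝ → ℝ → EuclideanSpace ℝ (Fin 4)
  | 0, X, u, v, w => deriv (fun t => X t v w) u
  | 1, X, u, v, w => deriv (fun t => X u t w) v
  | 2, X, u, v, w => deriv (fun t => X u v t) w

/-- The rotational hypersurface in `𝔼⁴` generated by the profile curve
`u ↦ (f u, 0, 0, φ u)` rotated about the `x₄`-axis. -/
def rotHyp (f φ : ℝ → ℝ) (u v w : ℝ) : EuclideanSpace ℝ (Fin 4) :=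
  vec4 (f u * cos v * cos w) (f u * sin v * cos w) (f u * sin w) (φ u)

/-- The Gauss map `G = W^{-1/2}·(φ'·cos v·cos w, φ'·sin v·cos w, φ'·sin w, -f')`,
where `W = f'² + φ'²`. -/
def gaussMap (f φ : ℝ → ℝ) (u v w : ℝ) : EuclideanSpace ℝ (Fin 4) :=
  ((deriv f u ^ 2 + deriv φ u ^ 2) ^ (-(1 : ℝ) / 2)) •
    vec4 (deriv φ u * cos v * cos w) (deriv φ u * sin v * cos w)
      (deriv φ u * sin w) (-deriv f u)

/-- The first fundamental form matrix `I = (⟨∂ᵢx, ∂ⱼx⟩)ᵢⱼ`. -/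
def firstFF (f φ : ℝ → ℝ) (u v w : ℝ) : Matrix (Fin 3) (Fin 3) ℝ :=
  Matrix.of fun i j => (inner ℝ (pd i (rotHyp f φ) u v w) (pd j (rotHyp f φ) u v w) : ℝ)

/-- The second fundamental form matrix `II = (⟨∂ᵢ∂ⱼx, G⟩)ᵢⱼ`. -/
def secondFF (f φ : ℝ → ℝ) (u v w : ℝ) : Matrix (Fin 3) (Fin 3) ℝ :=
  Matrix.of fun i j => (inner ℝ (pd i (pd j (rotHyp f φ)) u v w) (gaussMap f φ u v w) : ℝ)

/-- The third fundamental form matrix `III = (⟨∂ᵢG, ∂ⱼG⟩)ᵢⱼ`. -/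
def thirdFF (f φ : ℝ → ℝ) (u v w : ℝ) : Matrix (Fin 3) (Fin 3) ℝ :=
  Matrix.of fun i j => (inner ℝ (pd i (gaussMap f φ) u v w) (pd j (gaussMap f φ) u v w) : ℝ)

/-- The shape operator matrix `S = I⁻¹ · II`. -/
def shapeOp (f φ : ℝ → ℝ) (u v w : ℝ) : Matrix (Fin 3) (Fin 3) ℝ :=
  (firstFF f φ u v w)⁻¹ * secondFF f φ u v w

/-- The fourth fundamental form matrix `IV = III · S`. -/
def fourthFF (f φ : ℝ → ℝ) (u v w : ℝ) : Matrix (Fin 3) (Fin 3) ℝ :=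
  thirdFF f φ u v w * shapeOp f φ u v w

set_option linter.unusedSectionVars false
section Aux

lemma inner_vec4 (a b c d a' b' c' d' : ℝ) :
    (inner ℝ (vec4 a b c d) (vec4 a' b' c' d') : ℝ) = a*a'+b*b'+c*c'+d*d' := by
  simp [vec4, PiLp.inner_apply, Fin.sum_univ_four]
  ring

lemma smul_vec4 (r a b c d : ℝ) : r • vec4 a b c d = vec4 (r*a) (r*b) (r*c) (r*d) := by
  ext i; fin_cases i <;> simp [vec4]

lemma hasDerivAt_vec4 {a b c d : ℝ → ℝ} {a' b' c' d' t : ℝ}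
    (ha : HasDerivAt a a' t) (hb : HasDerivAt b b' t) (hc : HasDerivAt c c' t)
    (hd : HasDerivAt d d' t) :
    HasDerivAt (fun t => vec4 (a t) (b t) (c t) (d t)) (vec4 a' b' c' d') t := by
  have h : HasDerivAt (fun t => ![a t, b t, c t, d t]) ![a', b', c', d'] t := by
    rw [hasDerivAt_pi]; intro i; fin_cases i <;> simpa
  have := ((PiLp.continuousLinearEquiv 2 ℝ (fun _ : Fin 4 => ℝ)).symm.toContinuousLinearMap.hasFDerivAt).comp_hasDerivAt t h
  exact this

variable {f φ : ℝ → ℝ}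

lemma pd0_rotHyp (hf : Differentiable ℝ f) (hφ : Differentiable ℝ φ) :
    pd 0 (rotHyp f φ) = fun u v w => vec4 (deriv f u * cos v * cos w)
      (deriv f u * sin v * cos w) (deriv f u * sin w) (deriv φ u) := by
  funext u v w
  exact (hasDerivAt_vec4 (((hf u).hasDerivAt.mul_const _).mul_const _)
    (((hf u).hasDerivAt.mul_const _).mul_const _) ((hf u).hasDerivAt.mul_const _)
    (hφ u).hasDerivAt).deriv

lemma pd1_rotHyp :
    pd 1 (rotHyp f φ) = fun u v w => vec4 (f u * (-sin v) * cos w)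
      (f u * cos v * cos w) 0 0 := by
  funext u v w
  exact (hasDerivAt_vec4 (((hasDerivAt_cos v).const_mul (f u)).mul_const _)
    (((hasDerivAt_sin v).const_mul (f u)).mul_const _)
    (hasDerivAt_const _ _) (hasDerivAt_const _ _)).deriv

lemma pd2_rotHyp :
    pd 2 (rotHyp f φ) = fun u v w => vec4 (f u * cos v * (-sin w))
      (f u * sin v * (-sin w)) (f u * cos w) 0 := by
  funext u v w
  exact (hasDerivAt_vec4 ((hasDerivAt_cos w).const_mul _)
    ((hasDerivAt_cos w).const_mul _) ((hasDerivAt_sin w).const_mul _)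
    (hasDerivAt_const _ _)).deriv

section second
variable (hf : ContDiff ℝ (⊤ : ℕ∞) f) (hφ : ContDiff ℝ (⊤ : ℕ∞) φ)
include hf hφ

lemma pd00 : pd 0 (pd 0 (rotHyp f φ)) = fun u v w =>
    vec4 (deriv (deriv f) u * cos v * cos w) (deriv (deriv f) u * sin v * cos w)
      (deriv (deriv f) u * sin w) (deriv (deriv φ) u) := by
  have hfi : ContDiff ℝ ((⊤:ℕ∞):WithTop ℕ∞) f := hf.of_le (by simp)
  have hφi : ContDiff ℝ ((⊤:ℕ∞):WithTop ℕ∞) φ := hφ.of_le (by simp)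
  have hf' : Differentiable ℝ (deriv f) := ((contDiff_infty_iff_deriv.mp hfi).2).differentiable (by simp)
  have hφ' : Differentiable ℝ (deriv φ) := ((contDiff_infty_iff_deriv.mp hφi).2).differentiable (by simp)
  rw [pd0_rotHyp (hf.differentiable (by simp)) (hφ.differentiable (by simp))]
  funext u v w
  exact (hasDerivAt_vec4 (((hf' u).hasDerivAt.mul_const _).mul_const _)
    (((hf' u).hasDerivAt.mul_const _).mul_const _) ((hf' u).hasDerivAt.mul_const _)
    (hφ' u).hasDerivAt).deriv

lemma pd01 : pd 0 (pd 1 (rotHyp f φ)) = fun u v w =>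
    vec4 (deriv f u * (-sin v) * cos w) (deriv f u * cos v * cos w) 0 0 := by
  have hf' : Differentiable ℝ f := hf.differentiable (by simp)
  rw [pd1_rotHyp]
  funext u v w
  exact (hasDerivAt_vec4 (((hf' u).hasDerivAt.mul_const _).mul_const _)
    (((hf' u).hasDerivAt.mul_const _).mul_const _)
    (hasDerivAt_const _ _) (hasDerivAt_const _ _)).deriv

lemma pd02 : pd 0 (pd 2 (rotHyp f φ)) = fun u v w =>
    vec4 (deriv f u * cos v * (-sin w)) (deriv f u * sin v * (-sin w))
      (deriv f u * cos w) 0 := by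
  have hf' : Differentiable ℝ f := hf.differentiable (by simp)
  rw [pd2_rotHyp]
  funext u v w
  exact (hasDerivAt_vec4 (((hf' u).hasDerivAt.mul_const _).mul_const _)
    (((hf' u).hasDerivAt.mul_const _).mul_const _)
    ((hf' u).hasDerivAt.mul_const _) (hasDerivAt_const _ _)).deriv

lemma pd10 : pd 1 (pd 0 (rotHyp f φ)) = fun u v w =>
    vec4 (deriv f u * (-sin v) * cos w) (deriv f u * cos v * cos w) 0 0 := by
  rw [pd0_rotHyp (hf.differentiable (by simp)) (hφ.differentiable (by simp))]
  funext u v w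
  exact (hasDerivAt_vec4 (((hasDerivAt_cos v).const_mul _).mul_const _)
    (((hasDerivAt_sin v).const_mul _).mul_const _)
    (hasDerivAt_const _ _) (hasDerivAt_const _ _)).deriv

lemma pd11 : pd 1 (pd 1 (rotHyp f φ)) = fun u v w =>
    vec4 (f u * (-cos v) * cos w) (f u * (-sin v) * cos w) 0 0 := by
  rw [pd1_rotHyp]
  funext u v w
  exact (hasDerivAt_vec4 ((((hasDerivAt_sin v).neg).const_mul (f u)).mul_const _)
    (((hasDerivAt_cos v).const_mul (f u)).mul_const _)
    (hasDerivAt_const _ _) (hasDerivAt_const _ _)).deriv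

lemma pd12 : pd 1 (pd 2 (rotHyp f φ)) = fun u v w =>
    vec4 (f u * (-sin v) * (-sin w)) (f u * cos v * (-sin w)) 0 0 := by
  rw [pd2_rotHyp]
  funext u v w
  exact (hasDerivAt_vec4 (((hasDerivAt_cos v).const_mul (f u)).mul_const _)
    (((hasDerivAt_sin v).const_mul (f u)).mul_const _)
    (hasDerivAt_const _ _) (hasDerivAt_const _ _)).deriv

lemma pd20 : pd 2 (pd 0 (rotHyp f φ)) = fun u v w =>
    vec4 (deriv f u * cos v * (-sin w)) (deriv f u * sin v * (-sin w))
      (deriv f u * cos w) 0 := by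
  rw [pd0_rotHyp (hf.differentiable (by simp)) (hφ.differentiable (by simp))]
  funext u v w
  exact (hasDerivAt_vec4 ((hasDerivAt_cos w).const_mul _)
    ((hasDerivAt_cos w).const_mul _) ((hasDerivAt_sin w).const_mul _)
    (hasDerivAt_const _ _)).deriv

lemma pd21 : pd 2 (pd 1 (rotHyp f φ)) = fun u v w =>
    vec4 (f u * (-sin v) * (-sin w)) (f u * cos v * (-sin w)) 0 0 := by
  rw [pd1_rotHyp]
  funext u v w
  exact (hasDerivAt_vec4 ((hasDerivAt_cos w).const_mul _)
    ((hasDerivAt_cos w).const_mul _)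
    (hasDerivAt_const _ _) (hasDerivAt_const _ _)).deriv

lemma pd22 : pd 2 (pd 2 (rotHyp f φ)) = fun u v w =>
    vec4 (f u * cos v * (-cos w)) (f u * sin v * (-cos w)) (f u * (-sin w)) 0 := by
  rw [pd2_rotHyp]
  funext u v w
  exact (hasDerivAt_vec4 (((hasDerivAt_sin w).neg).const_mul _)
    (((hasDerivAt_sin w).neg).const_mul _) ((hasDerivAt_cos w).const_mul _)
    (hasDerivAt_const _ _)).deriv

end second
section forms
variable (hf : ContDiff ℝ (⊤ : ℕ∞) f) (hφ : ContDiff ℝ (⊤ : ℕ∞) φ)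
include hf hφ

lemma firstFF_eq (u v w : ℝ) :
    firstFF f φ u v w = Matrix.of
      ![![deriv f u ^ 2 + deriv φ u ^ 2, 0, 0],
        ![0, f u ^ 2 * cos w ^ 2, 0],
        ![0, 0, f u ^ 2]] := by
  have h0 := pd0_rotHyp (f := f) (φ := φ) (hf.differentiable (by simp)) (hφ.differentiable (by simp))
  ext i j
  fin_cases i <;> fin_cases j <;>
    simp only [firstFF, Fin.reduceFinMk, Fin.isValue, h0, pd1_rotHyp, pd2_rotHyp,
      Matrix.of_apply, inner_vec4, Matrix.cons_val', Matrix.cons_val_zero, Matrix.cons_val_one,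
      Matrix.head_cons, Matrix.cons_val_two, Matrix.tail_cons,
      Matrix.empty_val', Matrix.cons_val_fin_one, Matrix.head_fin_const]
  · linear_combination (deriv f u ^ 2 * cos w ^ 2) * sin_sq_add_cos_sq v
      + deriv f u ^ 2 * sin_sq_add_cos_sq w
  · ring
  · linear_combination (-(f u * deriv f u * cos w * sin w)) * sin_sq_add_cos_sq v
  · ring
  · linear_combination (f u ^ 2 * cos w ^ 2) * sin_sq_add_cos_sq v
  · ring
  · linear_combination (-(f u * deriv f u * cos w * sin w)) * sin_sq_add_cos_sq v
  · ring
  · linear_combination (f u ^ 2 * sin w ^ 2) * sin_sq_add_cos_sq v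
      + f u ^ 2 * sin_sq_add_cos_sq w

lemma secondFF_eq (u v w : ℝ) :
    secondFF f φ u v w = Matrix.of
      ![![(deriv f u ^ 2 + deriv φ u ^ 2) ^ (-(1:ℝ)/2) *
            (deriv (deriv f) u * deriv φ u - deriv f u * deriv (deriv φ) u), 0, 0],
        ![0, (deriv f u ^ 2 + deriv φ u ^ 2) ^ (-(1:ℝ)/2) *
            (-(f u * deriv φ u * cos w ^ 2)), 0],
        ![0, 0, (deriv f u ^ 2 + deriv φ u ^ 2) ^ (-(1:ℝ)/2) * (-(f u * deriv φ u))]] := by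
  set r := (deriv f u ^ 2 + deriv φ u ^ 2) ^ (-(1:ℝ)/2) with hr
  ext i j
  fin_cases i <;> fin_cases j <;>
    simp only [secondFF, gaussMap, ← hr, pd00 hf hφ, pd01 hf hφ, pd02 hf hφ, pd10 hf hφ,
      pd11 hf hφ, pd12 hf hφ, pd20 hf hφ, pd21 hf hφ, pd22 hf hφ,
      real_inner_smul_right, Matrix.of_apply, inner_vec4, Fin.reduceFinMk, Fin.isValue,
      Matrix.cons_val', Matrix.cons_val_zero, Matrix.cons_val_one, Matrix.head_cons,
      Matrix.cons_val_two, Matrix.tail_cons,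
      Matrix.empty_val', Matrix.cons_val_fin_one, Matrix.head_fin_const]
  · linear_combination (r * deriv (deriv f) u * deriv φ u * cos w ^ 2) * sin_sq_add_cos_sq v
      + (r * deriv (deriv f) u * deriv φ u) * sin_sq_add_cos_sq w
  · ring
  · linear_combination (-(r * deriv f u * deriv φ u * cos w * sin w)) * sin_sq_add_cos_sq v
  · ring
  · linear_combination (-(r * f u * deriv φ u * cos w ^ 2)) * sin_sq_add_cos_sq v
  · ring
  · linear_combination (-(r * deriv f u * deriv φ u * cos w * sin w)) * sin_sq_add_cos_sq v
  · ring
  · linear_combination (-(r * f u * deriv φ u * cos w ^ 2)) * sin_sq_add_cos_sq v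
      + (-(r * f u * deriv φ u)) * sin_sq_add_cos_sq w

end forms
section shape
variable (hf : ContDiff ℝ (⊤ : ℕ∞) f) (hφ : ContDiff ℝ (⊤ : ℕ∞) φ)
include hf hφ

lemma shapeOp_eq (u v w : ℝ) (hfu : f u ≠ 0)
    (hW : 0 < deriv f u ^ 2 + deriv φ u ^ 2) (hcw : cos w ≠ 0) :
    shapeOp f φ u v w = Matrix.of
      ![![(deriv f u ^ 2 + deriv φ u ^ 2) ^ (-(1:ℝ)/2) *
            (deriv (deriv f) u * deriv φ u - deriv f u * deriv (deriv φ) u)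
            / (deriv f u ^ 2 + deriv φ u ^ 2), 0, 0],
        ![0, -((deriv f u ^ 2 + deriv φ u ^ 2) ^ (-(1:ℝ)/2) * deriv φ u) / f u, 0],
        ![0, 0, -((deriv f u ^ 2 + deriv φ u ^ 2) ^ (-(1:ℝ)/2) * deriv φ u) / f u]] := by
  have hW' : deriv f u ^ 2 + deriv φ u ^ 2 ≠ 0 := ne_of_gt hW
  have hinv : (firstFF f φ u v w)⁻¹ = Matrix.of
      ![![(deriv f u ^ 2 + deriv φ u ^ 2)⁻¹, 0, 0],
        ![0, (f u ^ 2 * cos w ^ 2)⁻¹, 0],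
        ![0, 0, (f u ^ 2)⁻¹]] := by
    apply Matrix.inv_eq_right_inv
    rw [firstFF_eq hf hφ]
    ext i j
    fin_cases i <;> fin_cases j <;>
      simp [Matrix.mul_apply, Fin.sum_univ_three, Matrix.one_apply,
        Matrix.vecHead, Matrix.vecTail] <;>
      (try field_simp) <;> ring
  rw [shapeOp, hinv, secondFF_eq hf hφ]
  ext i j
  fin_cases i <;> fin_cases j <;>
    simp [Matrix.mul_apply, Fin.sum_univ_three, Matrix.vecHead, Matrix.vecTail] <;>
    (try field_simp) <;> (try ring)

lemma c1_char (u v w : ℝ) (hfu : f u ≠ 0)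
    (hW : 0 < deriv f u ^ 2 + deriv φ u ^ 2) (hcw : cos w ≠ 0)
    (c₁ c₂ c₃ : ℝ → ℝ → ℝ → ℝ)
    (hchar : ∀ lam : ℝ,
      (shapeOp f φ u v w - lam • (1 : Matrix (Fin 3) (Fin 3) ℝ)).det
        = -lam ^ 3 + 3 * c₁ u v w * lam ^ 2 - 3 * c₂ u v w * lam + c₃ u v w) :
    (c₁ u v w = 0 ↔
      2 * deriv φ u * (deriv f u ^ 2 + deriv φ u ^ 2)
        + f u * (deriv f u * deriv (deriv φ) u - deriv (deriv f) u * deriv φ u) = 0) := by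
  have hW' : deriv f u ^ 2 + deriv φ u ^ 2 ≠ 0 := ne_of_gt hW
  set r : ℝ := (deriv f u ^ 2 + deriv φ u ^ 2) ^ (-(1:ℝ)/2) with hrdef
  have hr : 0 < r := Real.rpow_pos_of_pos hW _
  set W : ℝ := deriv f u ^ 2 + deriv φ u ^ 2 with hWdef
  set A : ℝ := deriv (deriv f) u * deriv φ u - deriv f u * deriv (deriv φ) u with hA
  set s1 : ℝ := r * A / W with hs1
  set s2 : ℝ := -(r * deriv φ u) / f u with hs2
  have hdet : ∀ lam : ℝ, (shapeOp f φ u v w - lam • (1 : Matrix (Fin 3) (Fin 3) ℝ)).det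
      = (s1 - lam) * (s2 - lam) ^ 2 := by
    intro lam
    rw [shapeOp_eq hf hφ u v w hfu hW hcw]
    simp [Matrix.det_fin_three, Matrix.smul_apply, Matrix.one_apply, hs1, hs2]
    ring
  have e1 := (hdet 1).symm.trans (hchar 1)
  have em1 := (hdet (-1)).symm.trans (hchar (-1))
  have e0 := (hdet 0).symm.trans (hchar 0)
  have hc1 : c₁ u v w = (s1 + 2 * s2) / 3 := by linear_combination (2 * e0 - e1 - em1) / 6
  have hfactor : s1 + 2 * s2 = r * (A * f u - 2 * deriv φ u * W) / (W * f u) := by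
    rw [hs1, hs2]; field_simp; ring
  rw [hc1, div_eq_iff (by norm_num : (3:ℝ) ≠ 0), zero_mul, hfactor,
    div_eq_iff (mul_ne_zero hW' hfu), zero_mul, mul_eq_zero]
  constructor
  · rintro (h | h)
    · exact absurd h hr.ne'
    · linear_combination -h
  · intro h
    right
    linear_combination -h

end shape
end Aux

/-- Let `J` be an interval on which `f ≠ 0` and `W = f'² + φ'² > 0`,
and let the curvature functions `c₁, c₂, c₃` be defined by the characteristic
polynomial identity.  The rotational hypersurface is 1-minimal over `J`
(`c₁ = 0` at every point `(u,v,w)` with `u ∈ J` and `cos w ≠ 0`) iff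
`2φ'·(f'² + φ'²) + f·(f'·φ'' - f''·φ') = 0` on `J`. -/
theorem rotHyp_one_minimal_iff (f φ : ℝ → ℝ) (hf : ContDiff ℝ (⊤ : ℕ∞) f) (hφ : ContDiff ℝ (⊤ : ℕ∞) φ)
    (J : Set ℝ) (hJ : J.OrdConnected)
    (hfu : ∀ u ∈ J, f u ≠ 0) (hW : ∀ u ∈ J, 0 < deriv f u ^ 2 + deriv φ u ^ 2)
    (c₁ c₂ c₃ : ℝ → ℝ → ℝ → ℝ)
    (hchar : ∀ u v w lam : ℝ,
      (shapeOp f φ u v w - lam • (1 : Matrix (Fin 3) (Fin 3) ℝ)).det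
        = -lam ^ 3 + 3 * c₁ u v w * lam ^ 2 - 3 * c₂ u v w * lam + c₃ u v w) :
    (∀ u ∈ J, ∀ v w : ℝ, cos w ≠ 0 → c₁ u v w = 0) ↔
      (∀ u ∈ J,
        2 * deriv φ u * (deriv f u ^ 2 + deriv φ u ^ 2)
          + f u * (deriv f u * deriv (deriv φ) u - deriv (deriv f) u * deriv φ u) = 0) := by
  constructor
  · intro h u hu
    exact (c1_char hf hφ u 0 0 (hfu u hu) (hW u hu) (by simp) c₁ c₂ c₃
      (fun lam => hchar u 0 0 lam)).mp (h u hu 0 0 (by simp))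
  · intro h u hu v w hcw
    exact (c1_char hf hφ u v w (hfu u hu) (hW u hu) hcw c₁ c₂ c₃
      (fun lam => hchar u v w lam)).mpr (h u hu)

end
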